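/- arXiv:2510.00839 — 5 statements merged into one kernel-verified Lean document; each statement's English description precedes it below -/
import Mathlib

section
/- Let L > 0 and let f, g : ℤ³ → ℂ satisfy ‖f‖_{𝔄²} < ∞ and ‖g‖_{𝔄²} < ∞. Then for every m ∈ ℤ³ the convolution (f∗g)(m) := Σ_{n∈ℤ³} f(n)·g(m−n) converges absolutely, and Σ_{m∈ℤ³} (1 + 4π²|m|²/L²)·|(f∗g)(m)| ≤ (4/3)·‖f‖_{𝔄²}·‖g‖_{𝔄²}. (This is the Banach-algebra property of the weighted Wiener algebra of order 2.) -/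
open scoped BigOperators

noncomputable section

/-- Squared Euclidean norm of a lattice point `n ∈ ℤ³`. -/
def znormSq (n : Fin 3 → ℤ) : ℝ := ∑ i, ((n i : ℝ)) ^ 2

/-- The weight `1 + 4π²|m|²/L²` of the weighted Wiener algebra `𝔄²(Λ_L)`. -/
def wienerWeight (L : ℝ) (m : Fin 3 → ℤ) : ℝ :=
  1 + 4 * Real.pi ^ 2 * znormSq m / L ^ 2

/-- Finiteness of the weighted Wiener norm `‖a‖_{𝔄²} < ∞`. -/
def WienerSummable (L : ℝ) (a : (Fin 3 → ℤ) → ℂ) : Prop :=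
  Summable fun m => wienerWeight L m * ‖a m‖

/-- The weighted Wiener norm `‖a‖_{𝔄²} = Σ_m (1 + 4π²|m|²/L²)·|a(m)|`. -/
def wienerNorm (L : ℝ) (a : (Fin 3 → ℤ) → ℂ) : ℝ :=
  ∑' m, wienerWeight L m * ‖a m‖

def zvec (n : Fin 3 → ℤ) : EuclideanSpace ℝ (Fin 3) :=
  (WithLp.equiv 2 (Fin 3 → ℝ)).symm fun i => (n i : ℝ)

lemma znormSq_nonneg (n : Fin 3 → ℤ) : 0 ≤ znormSq n :=
  Finset.sum_nonneg fun _ _ => sq_nonneg _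

lemma znormSq_eq_normsq (n : Fin 3 → ℤ) :
    znormSq n = ‖zvec n‖ ^ 2 := by
  rw [EuclideanSpace.norm_eq, Real.sq_sqrt (Finset.sum_nonneg fun i _ => sq_nonneg _)]
  simp [znormSq, zvec, sq_abs]

lemma one_le_weight (L : ℝ) (hL : 0 < L) (m : Fin 3 → ℤ) : 1 ≤ wienerWeight L m := by
  have h1 := znormSq_nonneg m
  have h2 : 0 ≤ 4 * Real.pi ^ 2 * znormSq m / L ^ 2 := by positivity
  unfold wienerWeight; linarith

lemma weight_key (L : ℝ) (hL : 0 < L) (m n : Fin 3 → ℤ) :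
    wienerWeight L m ≤ (4 / 3) * (wienerWeight L n * wienerWeight L (m - n)) := by
  set c : ℝ := 4 * Real.pi ^ 2 / L ^ 2 with hc
  have hc0 : 0 ≤ c := by positivity
  have hsum : zvec m = zvec n + zvec (m - n) := by
    ext i
    simp only [zvec, WithLp.equiv_symm_apply, WithLp.ofLp_toLp, PiLp.add_apply, Pi.sub_apply]
    push_cast
    ring
  have htri : ‖zvec m‖ ≤ ‖zvec n‖ + ‖zvec (m - n)‖ := by
    rw [hsum]; exact norm_add_le _ _
  have hA : znormSq n = ‖zvec n‖ ^ 2 := znormSq_eq_normsq n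
  have hB : znormSq (m - n) = ‖zvec (m - n)‖ ^ 2 := znormSq_eq_normsq (m - n)
  have hC : znormSq m = ‖zvec m‖ ^ 2 := znormSq_eq_normsq m
  have hCsq : ‖zvec m‖ ^ 2 ≤ (‖zvec n‖ + ‖zvec (m - n)‖) ^ 2 :=
    pow_le_pow_left₀ (norm_nonneg _) htri 2
  have hwm : wienerWeight L m = 1 + c * znormSq m := by
    unfold wienerWeight; rw [hc]; ring
  have hwn : wienerWeight L n = 1 + c * znormSq n := by
    unfold wienerWeight; rw [hc]; ring
  have hwmn : wienerWeight L (m - n) = 1 + c * znormSq (m - n) := by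
    unfold wienerWeight; rw [hc]; ring
  rw [hwm, hwn, hwmn, hA, hB, hC]
  set A := ‖zvec n‖; set B := ‖zvec (m - n)‖
  have hA0 : 0 ≤ A := norm_nonneg _
  have hB0 : 0 ≤ B := norm_nonneg _
  nlinarith [sq_nonneg (2 * c * A * B - 1), mul_nonneg hc0 (sq_nonneg (A - B)),
    mul_le_mul_of_nonneg_left hCsq hc0, sq_nonneg (A + B), mul_nonneg hA0 hB0,
    mul_nonneg (mul_nonneg hc0 hA0) hB0]

def convEquiv : ((Fin 3 → ℤ) × (Fin 3 → ℤ)) ≃ ((Fin 3 → ℤ) × (Fin 3 → ℤ)) :=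
  { toFun := fun p => (p.2, p.1 - p.2)
    invFun := fun q => (q.1 + q.2, q.1)
    left_inv := fun p => by simp
    right_inv := fun q => by simp }

/-- Banach-algebra property of the weighted Wiener algebra of order 2:
for `f, g` with finite `𝔄²`-norm, the convolution `(f∗g)(m) = Σ_n f(n)·g(m−n)`
converges absolutely for every `m`, and
`Σ_m (1 + 4π²|m|²/L²)·|(f∗g)(m)| ≤ (4/3)·‖f‖_{𝔄²}·‖g‖_{𝔄²}`. -/
theorem stmt1 (L : ℝ) (hL : 0 < L) (f g : (Fin 3 → ℤ) → ℂ)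
    (hf : WienerSummable L f) (hg : WienerSummable L g) :
    (∀ m : Fin 3 → ℤ, Summable fun n => ‖f n * g (m - n)‖) ∧
    (Summable fun m => wienerWeight L m * ‖∑' n, f n * g (m - n)‖) ∧
    ∑' m, wienerWeight L m * ‖∑' n, f n * g (m - n)‖
      ≤ (4 / 3) * wienerNorm L f * wienerNorm L g := by
  set F : (Fin 3 → ℤ) → ℝ := fun n => wienerWeight L n * ‖f n‖ with hFdef
  set G : (Fin 3 → ℤ) → ℝ := fun n => wienerWeight L n * ‖g n‖ with hGdef
  have hw0 : ∀ k, (0:ℝ) ≤ wienerWeight L k := fun k =>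
    le_trans zero_le_one (one_le_weight L hL k)
  have hF0 : ∀ n, 0 ≤ F n := fun n => mul_nonneg (hw0 n) (norm_nonneg _)
  have hG0 : ∀ n, 0 ≤ G n := fun n => mul_nonneg (hw0 n) (norm_nonneg _)
  have habsf : ∀ n, ‖f n‖ ≤ F n := fun n =>
    le_mul_of_one_le_left (norm_nonneg _) (one_le_weight L hL n)
  have habsg : ∀ n, ‖g n‖ ≤ G n := fun n =>
    le_mul_of_one_le_left (norm_nonneg _) (one_le_weight L hL n)
  have hgbd : ∀ k, ‖g k‖ ≤ ∑' j, G j := fun k =>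
    (habsg k).trans (Summable.le_tsum hg k fun j _ => hG0 j)
  -- Part 1
  have part1 : ∀ m : Fin 3 → ℤ, Summable fun n => ‖f n * g (m - n)‖ := by
    intro m
    apply Summable.of_nonneg_of_le (fun n => norm_nonneg _)
      (fun n => ?_) (hf.mul_right (∑' j, G j))
    rw [norm_mul]
    exact mul_le_mul (habsf n) (hgbd (m - n)) (norm_nonneg _) (hF0 n)
  -- The dominating kernel
  set K : ((Fin 3 → ℤ) × (Fin 3 → ℤ)) → ℝ :=
    fun p => (4 / 3) * (F p.2 * G (p.1 - p.2)) with hKdef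
  have hprod : Summable fun p : ((Fin 3 → ℤ) × (Fin 3 → ℤ)) => F p.1 * G p.2 :=
    hf.mul_of_nonneg hg hF0 hG0
  have hprod' : Summable fun p : ((Fin 3 → ℤ) × (Fin 3 → ℤ)) =>
      (4 / 3 : ℝ) * (F p.1 * G p.2) := hprod.mul_left _
  have hK : Summable K := by
    have := hprod'.comp_injective convEquiv.injective
    exact this
  have hKfib : ∀ m, Summable fun n => K (m, n) := fun m => hK.prod_factor m
  set T : (Fin 3 → ℤ) → ℝ := fun m => ∑' n, K (m, n) with hTdef
  have hThas : HasSum T (∑' p, K p) :=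
    HasSum.prod_fiberwise hK.hasSum fun m => (hKfib m).hasSum
  have hT : Summable T := hThas.summable
  -- pointwise bound
  have hpt : ∀ m, wienerWeight L m * ‖∑' n, f n * g (m - n)‖ ≤ T m := by
    intro m
    have h1 : ‖∑' n, f n * g (m - n)‖ ≤ ∑' n, ‖f n * g (m - n)‖ := by
      exact norm_tsum_le_tsum_norm (part1 m)
    calc wienerWeight L m * ‖∑' n, f n * g (m - n)‖
        ≤ wienerWeight L m * ∑' n, ‖f n * g (m - n)‖ :=
          mul_le_mul_of_nonneg_left h1 (hw0 m)
      _ = ∑' n, wienerWeight L m * ‖f n * g (m - n)‖ := (tsum_mul_left).symm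
      _ ≤ ∑' n, K (m, n) := by
          apply Summable.tsum_le_tsum _ ((part1 m).mul_left _) (hKfib m)
          intro n
          rw [norm_mul]
          calc wienerWeight L m * (‖f n‖ * ‖g (m - n)‖)
              ≤ (4 / 3) * (wienerWeight L n * wienerWeight L (m - n)) *
                (‖f n‖ * ‖g (m - n)‖) :=
                mul_le_mul_of_nonneg_right (weight_key L hL m n)
                  (mul_nonneg (norm_nonneg _) (norm_nonneg _))
            _ = K (m, n) := by simp only [hKdef, hFdef, hGdef]; ring
  have part2 : Summable fun m => wienerWeight L m * ‖∑' n, f n * g (m - n)‖ :=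
    Summable.of_nonneg_of_le
      (fun m => mul_nonneg (hw0 m) (norm_nonneg _)) hpt hT
  refine ⟨part1, part2, ?_⟩
  have hsumT : ∑' m, T m = (4 / 3) * wienerNorm L f * wienerNorm L g := by
    have h1 : ∑' m, T m = ∑' p, K p := hThas.tsum_eq
    have h2 : ∑' p, K p = ∑' p : ((Fin 3 → ℤ) × (Fin 3 → ℤ)), (4 / 3 : ℝ) * (F p.1 * G p.2) := by
      rw [← convEquiv.tsum_eq fun p => (4 / 3 : ℝ) * (F p.1 * G p.2)]
      rfl
    have h3 : ∑' p : ((Fin 3 → ℤ) × (Fin 3 → ℤ)), (4 / 3 : ℝ) * (F p.1 * G p.2)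
        = (4 / 3) * ∑' p : ((Fin 3 → ℤ) × (Fin 3 → ℤ)), F p.1 * G p.2 := tsum_mul_left
    have h4 : ((∑' n, F n) * ∑' n, G n) = ∑' p : ((Fin 3 → ℤ) × (Fin 3 → ℤ)), F p.1 * G p.2 :=
      Summable.tsum_mul_tsum hf hg hprod
    rw [h1, h2, h3, ← h4]
    show (4 / 3 : ℝ) * (wienerNorm L f * wienerNorm L g) = _
    ring
  calc ∑' m, wienerWeight L m * ‖∑' n, f n * g (m - n)‖
      ≤ ∑' m, T m := Summable.tsum_le_tsum hpt part2 hT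
    _ = (4 / 3) * wienerNorm L f * wienerNorm L g := hsumT


end
end

section
/- Let α : ℤ³ → ℂ satisfy Σ_{n∈ℤ³} |α(n)| < ∞ and Σ_{n∈ℤ³} |α(n)|² = 1, let k₀ ∈ ℤ³ and θ ∈ ℝ, and set r(n) := α(n) − e^{iθ}·δ_{n,k₀} (Kronecker delta). Let β be the autocorrelation of α. Then Σ_{k∈ℤ³, k≠0} |β(k)|² ≤ 3·(Σ_{n}|r(n)|)²·(Σ_{n}|r(n)|²) + 6·Σ_{n}|r(n)|². -/
open scoped BigOperators

noncomputable section

abbrev Idx := Fin 3 → ℤ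

/-- Autocorrelation `β(k) = Σ_m conj(α(m))·α(m+k)` of a family `α : ℤ³ → ℂ`. -/
def autocorr (a : (Fin 3 → ℤ) → ℂ) (k : Fin 3 → ℤ) : ℂ :=
  ∑' m, (starRingEnd ℂ) (a m) * a (m + k)

/-- `e^{iθ}` times the Kronecker delta at `k₀`. -/
def kdelta (k₀ : Fin 3 → ℤ) (θ : ℝ) (n : Fin 3 → ℤ) : ℂ :=
  if n = k₀ then Complex.exp ((θ : ℂ) * Complex.I) else 0


lemma tsum_shift (f : Idx → ℝ) (k : Idx) : ∑' m, f (m + k) = ∑' m, f m := by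
  simpa using (Equiv.addRight k).tsum_eq f

lemma summable_shift {f : Idx → ℝ} (hf : Summable f) (k : Idx) :
    Summable fun m => f (m + k) :=
  ((Equiv.addRight k).summable_iff (f := f)).mpr hf

def shearE : Idx × Idx ≃ Idx × Idx :=
  (Equiv.prodComm Idx Idx).trans ((Equiv.refl Idx).prodShear (fun m => Equiv.addLeft m))

def cfun (r : Idx → ℂ) (k : Idx) : ℝ := ∑' m, ‖r m‖ * ‖r (m + k)‖

lemma summable_c_inner {r : Idx → ℂ} (hr2 : Summable fun n => ‖r n‖ ^ 2) (k : Idx) :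
    Summable fun m => ‖r m‖ * ‖r (m + k)‖ := by
  have h2 : ∀ m, ‖r m‖ * ‖r (m + k)‖ ≤
      (‖r m‖ ^ 2 + ‖r (m + k)‖ ^ 2) / 2 := by
    intro m
    nlinarith [sq_nonneg (‖r m‖ - ‖r (m + k)‖)]
  refine Summable.of_nonneg_of_le (fun m => by positivity) h2 ?_
  exact ((hr2.add (summable_shift hr2 k)).div_const 2)

lemma cfun_nonneg (r : Idx → ℂ) (k : Idx) : 0 ≤ cfun r k :=
  tsum_nonneg fun m => by positivity

lemma cfun_le {r : Idx → ℂ} (hr2 : Summable fun n => ‖r n‖ ^ 2) (k : Idx) :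
    cfun r k ≤ ∑' n, ‖r n‖ ^ 2 := by
  have h := Summable.tsum_le_tsum (f := fun m => ‖r m‖ * ‖r (m + k)‖)
    (g := fun m => (‖r m‖ ^ 2 + ‖r (m + k)‖ ^ 2) / 2)
    (fun m => by nlinarith [sq_nonneg (‖r m‖ - ‖r (m + k)‖)])
    (summable_c_inner hr2 k) ((hr2.add (summable_shift hr2 k)).div_const 2)
  calc cfun r k ≤ ∑' m, (‖r m‖ ^ 2 + ‖r (m + k)‖ ^ 2) / 2 := h
  _ = ((∑' m, ‖r m‖ ^ 2) + ∑' m, ‖r (m + k)‖ ^ 2) / 2 := by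
      rw [tsum_div_const, Summable.tsum_add hr2 (summable_shift hr2 k)]
  _ = ∑' n, ‖r n‖ ^ 2 := by
      rw [tsum_shift (fun m => ‖r m‖ ^ 2) k]; ring

lemma summable_G {r : Idx → ℂ} (hr1 : Summable fun n => ‖r n‖) :
    Summable fun p : Idx × Idx => ‖r p.2‖ * ‖r (p.2 + p.1)‖ := by
  have hF : Summable fun p : Idx × Idx => ‖r p.1‖ * ‖r p.2‖ :=
    hr1.mul_of_nonneg hr1 (fun _ => norm_nonneg _) (fun _ => norm_nonneg _)
  have := hF.comp_injective (shearE).injective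
  refine this.congr fun p => ?_
  simp [shearE, Equiv.prodShear, Function.comp]

lemma summable_cfun {r : Idx → ℂ} (hr1 : Summable fun n => ‖r n‖) :
    Summable (cfun r) :=
  (summable_G hr1).prod

lemma tsum_cfun_le {r : Idx → ℂ} (hr1 : Summable fun n => ‖r n‖) :
    ∑' k, cfun r k ≤ (∑' n, ‖r n‖) ^ 2 := by
  have h := summable_G hr1
  have heq : ∑' k, cfun r k = ∑' p : Idx × Idx, ‖r p.2‖ * ‖r (p.2 + p.1)‖ :=
    (Summable.tsum_prod h).symm
  rw [heq]
  -- now compute the double sum as a product of sums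
  have hF : Summable fun p : Idx × Idx => ‖r p.1‖ * ‖r p.2‖ :=
    hr1.mul_of_nonneg hr1 (fun _ => norm_nonneg _) (fun _ => norm_nonneg _)
  have h2 : ∑' p : Idx × Idx, ‖r p.2‖ * ‖r (p.2 + p.1)‖
      = ∑' p : Idx × Idx, ‖r p.1‖ * ‖r p.2‖ := by
    rw [← (shearE).tsum_eq (fun p : Idx × Idx => ‖r p.1‖ * ‖r p.2‖)]
    refine tsum_congr fun p => ?_
    simp [shearE, Equiv.prodShear]
  rw [h2, Summable.tsum_prod hF]
  simp_rw [tsum_mul_left]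
  rw [tsum_mul_right, sq]

lemma kdelta_abs (k₀ : Idx) (θ : ℝ) (n : Idx) :
    ‖kdelta k₀ θ n‖ = if n = k₀ then 1 else 0 := by
  unfold kdelta
  split <;> simp [Complex.norm_exp_ofReal_mul_I]

lemma hd1 (k₀ : Idx) (θ : ℝ) : Summable fun n => ‖kdelta k₀ θ n‖ := by
  apply summable_of_ne_finset_zero (s := {k₀})
  intro n hn
  simp only [Finset.mem_singleton] at hn
  simp [kdelta_abs, hn]

lemma hd2 (k₀ : Idx) (θ : ℝ) : Summable fun n => ‖kdelta k₀ θ n‖ ^ 2 := by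
  apply summable_of_ne_finset_zero (s := {k₀})
  intro n hn
  simp only [Finset.mem_singleton] at hn
  simp [kdelta_abs, hn]

lemma hr1' {α : Idx → ℂ} (hl1 : Summable fun n => ‖α n‖) (k₀ : Idx) (θ : ℝ) :
    Summable fun n => ‖α n - kdelta k₀ θ n‖ := by
  refine Summable.of_nonneg_of_le (fun n => norm_nonneg _)
    (fun n => ?_) (hl1.add (hd1 k₀ θ))
  exact (norm_sub_le _ _)

lemma hr2' {α : Idx → ℂ} (hl2sum : Summable fun n => ‖α n‖ ^ 2) (k₀ : Idx) (θ : ℝ) :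
    Summable fun n => ‖α n - kdelta k₀ θ n‖ ^ 2 := by
  refine Summable.of_nonneg_of_le (fun n => by positivity) (fun n => ?_)
    ((hl2sum.mul_left 2).add ((hd2 k₀ θ).mul_left 2))
  have h := norm_sub_le (α n) (kdelta k₀ θ n)
  have h0 : (0:ℝ) ≤ ‖α n - kdelta k₀ θ n‖ := norm_nonneg _
  nlinarith [sq_nonneg (‖α n‖ - ‖kdelta k₀ θ n‖),
    norm_nonneg (α n), norm_nonneg (kdelta k₀ θ n)]

lemma autocorr_bound {α : Idx → ℂ} (hl2sum : Summable fun n => ‖α n‖ ^ 2)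
    (k₀ : Idx) (θ : ℝ) {k : Idx} (hk : k ≠ 0) :
    ‖autocorr α k‖ ≤
      cfun (fun n => α n - kdelta k₀ θ n) k
        + ‖α (k₀ - k) - kdelta k₀ θ (k₀ - k)‖
        + ‖α (k₀ + k) - kdelta k₀ θ (k₀ + k)‖ := by
  set r : Idx → ℂ := fun n => α n - kdelta k₀ θ n with hr
  set d : Idx → ℂ := kdelta k₀ θ with hd
  have hr2 : Summable fun n => ‖r n‖ ^ 2 := hr2' hl2sum k₀ θ
  have hA : Summable fun m => (starRingEnd ℂ) (r m) * r (m + k) := by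
    apply Summable.of_norm
    refine (summable_c_inner hr2 k).congr fun m => ?_
    simp [Complex.norm_conj]
  have hB : Summable fun m => (starRingEnd ℂ) (r m) * d (m + k) := by
    apply summable_of_ne_finset_zero (s := {k₀ - k})
    intro m hm
    simp only [Finset.mem_singleton] at hm
    have : m + k ≠ k₀ := fun h => hm (by simp [← h])
    simp [hd, kdelta, this]
  have hC : Summable fun m => (starRingEnd ℂ) (d m) * r (m + k) := by
    apply summable_of_ne_finset_zero (s := {k₀})
    intro m hm
    simp only [Finset.mem_singleton] at hm
    simp [hd, kdelta, hm]
  have hDzero : ∀ m, (starRingEnd ℂ) (d m) * d (m + k) = 0 := by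
    intro m
    by_cases hm : m = k₀
    · have : m + k ≠ k₀ := by
        rw [hm]; intro h; exact hk (by simpa using congrArg (· - k₀) h)
      simp [hd, kdelta, this]
    · simp [hd, kdelta, hm]
  have hsplit : autocorr α k =
      (∑' m, (starRingEnd ℂ) (r m) * r (m + k))
      + ((∑' m, (starRingEnd ℂ) (r m) * d (m + k))
      + (∑' m, (starRingEnd ℂ) (d m) * r (m + k))) := by
    unfold autocorr
    have hpt : ∀ m, (starRingEnd ℂ) (α m) * α (m + k) =
        (starRingEnd ℂ) (r m) * r (m + k)
        + ((starRingEnd ℂ) (r m) * d (m + k)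
        + ((starRingEnd ℂ) (d m) * r (m + k) + (starRingEnd ℂ) (d m) * d (m + k))) := by
      intro m
      have : α m = r m + d m := by simp [hr]
      have h2 : α (m + k) = r (m + k) + d (m + k) := by simp [hr]
      rw [this, h2, map_add]
      ring
    rw [tsum_congr hpt]
    rw [Summable.tsum_add hA (hB.add (hC.add (summable_zero.congr fun m => (hDzero m).symm)))]
    rw [Summable.tsum_add hB (hC.add (summable_zero.congr fun m => (hDzero m).symm))]
    rw [Summable.tsum_add hC (summable_zero.congr fun m => (hDzero m).symm)]
    simp [tsum_congr hDzero]
  have habsA : ‖∑' m, (starRingEnd ℂ) (r m) * r (m + k)‖ ≤ cfun r k := by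
    have := norm_tsum_le_tsum_norm (f := fun m => (starRingEnd ℂ) (r m) * r (m + k))
      (by refine (summable_c_inner hr2 k).congr fun m => ?_; simp [Complex.norm_conj])
    calc ‖∑' m, (starRingEnd ℂ) (r m) * r (m + k)‖
        ≤ ∑' m, ‖(starRingEnd ℂ) (r m) * r (m + k)‖ := this
      _ = cfun r k := by
          unfold cfun
          exact tsum_congr fun m => by simp [Complex.norm_conj]
  have habsB : ‖∑' m, (starRingEnd ℂ) (r m) * d (m + k)‖
      = ‖r (k₀ - k)‖ := by
    rw [tsum_eq_single (k₀ - k) ?_]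
    · have : k₀ - k + k = k₀ := by abel
      simp [hd, kdelta, this, Complex.norm_conj, Complex.norm_exp_ofReal_mul_I]
    · intro m hm
      have : m + k ≠ k₀ := fun h => hm (by simp [← h])
      simp [hd, kdelta, this]
  have habsC : ‖∑' m, (starRingEnd ℂ) (d m) * r (m + k)‖
      = ‖r (k₀ + k)‖ := by
    rw [tsum_eq_single k₀ ?_]
    · simp [hd, kdelta, Complex.norm_conj, Complex.norm_exp_ofReal_mul_I]
    · intro m hm
      simp [hd, kdelta, hm]
  calc ‖autocorr α k‖
      ≤ ‖∑' m, (starRingEnd ℂ) (r m) * r (m + k)‖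
        + (‖∑' m, (starRingEnd ℂ) (r m) * d (m + k)‖
        + ‖∑' m, (starRingEnd ℂ) (d m) * r (m + k)‖) := by
        rw [hsplit]
        exact (norm_add_le _ _).trans (by gcongr; exact norm_add_le _ _)
    _ ≤ cfun r k + ‖r (k₀ - k)‖ + ‖r (k₀ + k)‖ := by
        rw [habsB, habsC]; linarith [habsA]

lemma tsum_subR (f : Idx → ℝ) (k₀ : Idx) : ∑' k, f (k₀ - k) = ∑' m, f m := by
  simpa using (Equiv.subLeft k₀).tsum_eq f

lemma tsum_addL (f : Idx → ℝ) (k₀ : Idx) : ∑' k, f (k₀ + k) = ∑' m, f m := by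
  simpa using (Equiv.addLeft k₀).tsum_eq f

/-- with `r(n) = α(n) − e^{iθ}δ_{n,k₀}` and `β` the autocorrelation
of `α` (normalized so that `Σ|α|² = 1`),
`Σ_{k≠0} |β(k)|² ≤ 3·(Σ|r|)²·(Σ|r|²) + 6·Σ|r|²`. -/
theorem stmt8 (α : (Fin 3 → ℤ) → ℂ)
    (hl1 : Summable fun n => ‖α n‖)
    (hl2sum : Summable fun n => ‖α n‖ ^ 2)
    (hl2 : ∑' n, ‖α n‖ ^ 2 = 1)
    (k₀ : Fin 3 → ℤ) (θ : ℝ) :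
    Summable (fun k : {k : Fin 3 → ℤ // k ≠ 0} =>
      ‖autocorr α (k : Fin 3 → ℤ)‖ ^ 2) ∧
    ∑' k : {k : Fin 3 → ℤ // k ≠ 0}, ‖autocorr α (k : Fin 3 → ℤ)‖ ^ 2
      ≤ 3 * (∑' n, ‖α n - kdelta k₀ θ n‖) ^ 2 *
            (∑' n, ‖α n - kdelta k₀ θ n‖ ^ 2)
        + 6 * ∑' n, ‖α n - kdelta k₀ θ n‖ ^ 2 := by
  set r : Idx → ℂ := fun n => α n - kdelta k₀ θ n with hrdef
  have hr1 : Summable fun n => ‖r n‖ := hr1' hl1 k₀ θ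
  have hr2 : Summable fun n => ‖r n‖ ^ 2 := hr2' hl2sum k₀ θ
  set R1 : ℝ := ∑' n, ‖r n‖ with hR1
  set R2 : ℝ := ∑' n, ‖r n‖ ^ 2 with hR2
  have hR2nonneg : 0 ≤ R2 := tsum_nonneg fun n => by positivity
  set g : Idx → ℝ := fun k =>
    3 * (cfun r k ^ 2 + ‖r (k₀ - k)‖ ^ 2 + ‖r (k₀ + k)‖ ^ 2) with hgdef
  have hbound : ∀ k : Idx, k ≠ 0 → ‖autocorr α k‖ ^ 2 ≤ g k := by
    intro k hk
    have h := autocorr_bound hl2sum k₀ θ hk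
    have h0 : (0:ℝ) ≤ ‖autocorr α k‖ := norm_nonneg _
    have hc := cfun_nonneg r k
    have h1 : (0:ℝ) ≤ ‖r (k₀ - k)‖ := norm_nonneg _
    have h2 : (0:ℝ) ≤ ‖r (k₀ + k)‖ := norm_nonneg _
    simp only [hgdef]
    nlinarith [sq_nonneg (cfun r k - ‖r (k₀ - k)‖),
      sq_nonneg (cfun r k - ‖r (k₀ + k)‖),
      sq_nonneg (‖r (k₀ - k)‖ - ‖r (k₀ + k)‖)]
  have hs1 : Summable fun k : Idx => cfun r k ^ 2 := by
    refine Summable.of_nonneg_of_le (fun k => by positivity) (fun k => ?_)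
      ((summable_cfun hr1).mul_left R2)
    have := cfun_le hr2 k
    have := cfun_nonneg r k
    nlinarith
  have hs2 : Summable fun k : Idx => ‖r (k₀ - k)‖ ^ 2 := by
    apply hr2.comp_injective
    intro a b hab
    have := congrArg (fun x => k₀ - x) (rfl : k₀ - a = k₀ - a)
    simpa using sub_right_injective hab
  have hs3 : Summable fun k : Idx => ‖r (k₀ + k)‖ ^ 2 := by
    apply hr2.comp_injective
    exact add_right_injective k₀
  have hg : Summable g := ((hs1.add hs2).add hs3).mul_left 3
  have hsumLHS : Summable (fun k : {k : Idx // k ≠ 0} =>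
      ‖autocorr α (k : Idx)‖ ^ 2) := by
    refine Summable.of_nonneg_of_le (fun k => by positivity)
      (fun k => hbound k.1 k.2) ?_
    exact hg.subtype _
  refine ⟨hsumLHS, ?_⟩
  have step1 : ∑' k : {k : Idx // k ≠ 0}, ‖autocorr α (k : Idx)‖ ^ 2
      ≤ ∑' k : {k : Idx // k ≠ 0}, g k :=
    Summable.tsum_le_tsum (fun k => hbound k.1 k.2) hsumLHS (hg.subtype _)
  have step2 : ∑' k : {k : Idx // k ≠ 0}, g (k : Idx) ≤ ∑' k : Idx, g k :=
    Summable.tsum_subtype_le g {k : Idx | k ≠ 0} (fun k => by positivity) hg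
  have step3 : ∑' k : Idx, g k =
      3 * ((∑' k, cfun r k ^ 2) + R2 + R2) := by
    simp only [hgdef]
    rw [tsum_mul_left]
    rw [Summable.tsum_add (hs1.add hs2) hs3, Summable.tsum_add hs1 hs2]
    rw [tsum_subR (fun m => ‖r m‖ ^ 2) k₀,
      tsum_addL (fun m => ‖r m‖ ^ 2) k₀]
  have step4 : (∑' k, cfun r k ^ 2) ≤ R2 * R1 ^ 2 := by
    have hle : ∑' k, cfun r k ^ 2 ≤ ∑' k, R2 * cfun r k := by
      refine Summable.tsum_le_tsum (fun k => ?_) hs1 ((summable_cfun hr1).mul_left R2)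
      have := cfun_le hr2 k
      have := cfun_nonneg r k
      nlinarith
    rw [tsum_mul_left] at hle
    have := tsum_cfun_le hr1
    calc ∑' k, cfun r k ^ 2 ≤ R2 * ∑' k, cfun r k := hle
      _ ≤ R2 * R1 ^ 2 := by
          apply mul_le_mul_of_nonneg_left _ hR2nonneg
          exact this
  calc ∑' k : {k : Idx // k ≠ 0}, ‖autocorr α (k : Idx)‖ ^ 2
      ≤ ∑' k : Idx, g k := le_trans step1 step2
    _ = 3 * ((∑' k, cfun r k ^ 2) + R2 + R2) := step3
    _ ≤ 3 * (R2 * R1 ^ 2 + R2 + R2) := by linarith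
    _ = 3 * R1 ^ 2 * R2 + 6 * R2 := by ring

end
end

section
/- Let b > 0, S₀ > 0, T > 0, and let S : [0,T] → ℝ be continuous with S(t) ≥ 0 for all t and S(t) ≤ S₀ + b·∫₀ᵗ S(s)³ ds for all t ∈ [0,T]. Then for every t ∈ [0,T] with 2·S₀²·b·t < 1 one has S(t) ≤ S₀ / √(1 − 2·S₀²·b·t). -/
open MeasureTheory intervalIntegral
open Set Filter Topology

theorem aux1 (b S₀ T : ℝ) (hb : 0 < b) (hS₀ : 0 < S₀) (hT : 0 < T)
    (S : ℝ → ℝ) (hScont : ContinuousOn S (Set.Icc 0 T))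
    (hSnn : ∀ t ∈ Set.Icc (0 : ℝ) T, 0 ≤ S t)
    (hSint : ∀ t ∈ Set.Icc (0 : ℝ) T, S t ≤ S₀ + b * ∫ s in (0 : ℝ)..t, (S s) ^ 3)
    (c b' : ℝ) (hc : S₀ < c) (hb' : b < b')
    (t : ℝ) (ht : t ∈ Set.Icc (0:ℝ) T) (h1 : 2 * c ^ 2 * b' * t < 1) :
    S t ≤ c / Real.sqrt (1 - 2 * c ^ 2 * b' * t) := by
  obtain ⟨ht0, htT⟩ := ht
  have hcpos : 0 < c := hS₀.trans hc
  have hb'pos : 0 < b' := hb.trans hb'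
  set S' : ℝ → ℝ := fun x => S (max 0 (min x T)) with hS'def
  have hmem : ∀ x : ℝ, max 0 (min x T) ∈ Set.Icc (0:ℝ) T := fun x =>
    ⟨le_max_left _ _, max_le hT.le (min_le_right x T)⟩
  have hS'cont : Continuous S' :=
    hScont.comp_continuous (continuous_const.max (continuous_id.min continuous_const)) hmem
  have hS'eq : ∀ x ∈ Set.Icc (0:ℝ) T, S' x = S x := by
    intro x hx
    simp only [hS'def]
    rw [min_eq_left hx.2, max_eq_right hx.1]
  have hinteq : ∀ u ∈ Set.Icc (0:ℝ) T,
      (∫ s in (0:ℝ)..u, (S s) ^ 3) = ∫ s in (0:ℝ)..u, (S' s) ^ 3 := by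
    intro u hu
    apply intervalIntegral.integral_congr
    intro x hx
    rw [Set.uIcc_of_le hu.1] at hx
    simp only [hS'eq x ⟨hx.1, hx.2.trans hu.2⟩]
  set f : ℝ → ℝ := fun u => S₀ + b * ∫ s in (0:ℝ)..u, (S' s) ^ 3 with hfdef
  have hfderiv : ∀ x : ℝ, HasDerivAt f (b * S' x ^ 3) x := fun x =>
    ((((hS'cont.pow 3).integral_hasStrictDerivAt 0 x).hasDerivAt).const_mul b).const_add S₀
  have hSlef : ∀ x ∈ Set.Icc (0:ℝ) T, S x ≤ f x := by
    intro x hx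
    have := hSint x hx
    rwa [hinteq x hx] at this
  set a : ℝ := 2 * c ^ 2 * b' with hadef
  have hapos : 0 < a := by positivity
  set B : ℝ → ℝ := fun u => c / Real.sqrt (1 - a * u) with hBdef
  have hpos : ∀ x, 0 ≤ x → x ≤ t → 0 < 1 - a * x := by
    intro x hx0 hxt
    have : a * x ≤ a * t := mul_le_mul_of_nonneg_left hxt hapos.le
    linarith
  have hBderiv : ∀ x ∈ Set.Ico (0:ℝ) t, HasDerivAt B (b' * B x ^ 3) x := by
    intro x hx
    have hx1 : 0 < 1 - a * x := hpos x hx.1 hx.2.le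
    have hsq : 0 < Real.sqrt (1 - a * x) := Real.sqrt_pos.2 hx1
    have hsne : Real.sqrt (1 - a * x) ≠ 0 := ne_of_gt hsq
    have h2 : Real.sqrt (1 - a * x) ^ 2 = 1 - a * x := Real.sq_sqrt hx1.le
    have h0 : HasDerivAt (fun u : ℝ => 1 - a * u) (-a) x := by
      simpa using ((hasDerivAt_id x).const_mul a).const_sub 1
    have hg : HasDerivAt (fun u => Real.sqrt (1 - a * u))
        (-a / (2 * Real.sqrt (1 - a * x))) x := by
      have := (Real.hasDerivAt_sqrt (ne_of_gt hx1)).comp x h0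
      simp only [Function.comp_def] at this
      exact this.congr_deriv (by ring)
    have hd := (hasDerivAt_const x c).div hg hsne
    refine hd.congr_deriv (Eq.symm ?_)
    show b' * (c / Real.sqrt (1 - a * x)) ^ 3 = _
    field_simp
    linear_combination (-c) * hadef
  have hBcont : ContinuousOn B (Set.Icc 0 t) := by
    apply ContinuousOn.div continuousOn_const
    · exact (Real.continuous_sqrt.comp
        (continuous_const.sub (continuous_const.mul continuous_id))).continuousOn
    · intro x hx
      exact ne_of_gt (Real.sqrt_pos.2 (hpos x hx.1 hx.2))
  have hfcont : Continuous f := continuous_iff_continuousAt.2 fun x => (hfderiv x).continuousAt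
  have ha0 : f 0 ≤ B 0 := by
    simp only [hfdef, hBdef, intervalIntegral.integral_same, mul_zero, add_zero, sub_zero,
      Real.sqrt_one, div_one]
    exact hc.le
  have bound : ∀ x ∈ Set.Ico (0:ℝ) t, f x = B x → b * S' x ^ 3 < b' * B x ^ 3 := by
    intro x hx heq
    have hxT : x ∈ Set.Icc (0:ℝ) T := ⟨hx.1, hx.2.le.trans htT⟩
    have hSx : 0 ≤ S x := hSnn x hxT
    have hSB : S x ≤ B x := (hSlef x hxT).trans heq.le
    have hBpos : 0 < B x := div_pos hcpos (Real.sqrt_pos.2 (hpos x hx.1 hx.2.le))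
    rw [hS'eq x hxT]
    calc b * S x ^ 3 ≤ b * B x ^ 3 :=
          mul_le_mul_of_nonneg_left (pow_le_pow_left₀ hSx hSB 3) hb.le
      _ < b' * B x ^ 3 := mul_lt_mul_of_pos_right hb' (by positivity)
  have key := image_le_of_deriv_right_lt_deriv_boundary' hfcont.continuousOn
    (fun x hx => (hfderiv x).hasDerivWithinAt) ha0 hBcont
    (fun x hx => (hBderiv x hx).hasDerivWithinAt) bound
  exact (hSlef t ⟨ht0, htT⟩).trans (key (Set.right_mem_Icc.2 ht0))



/-- nonlinear Grönwall-type estimate. If `S` is continuous, nonnegative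
and satisfies `S(t) ≤ S₀ + b·∫₀ᵗ S(s)³ ds` on `[0,T]`, then for every `t ∈ [0,T]`
with `2S₀²bt < 1` one has `S(t) ≤ S₀/√(1 − 2S₀²bt)`. -/
theorem stmt10 (b S₀ T : ℝ) (hb : 0 < b) (hS₀ : 0 < S₀) (hT : 0 < T)
    (S : ℝ → ℝ) (hScont : ContinuousOn S (Set.Icc 0 T))
    (hSnn : ∀ t ∈ Set.Icc (0 : ℝ) T, 0 ≤ S t)
    (hSint : ∀ t ∈ Set.Icc (0 : ℝ) T, S t ≤ S₀ + b * ∫ s in (0 : ℝ)..t, (S s) ^ 3) :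
    ∀ t ∈ Set.Icc (0 : ℝ) T, 2 * S₀ ^ 2 * b * t < 1 →
      S t ≤ S₀ / Real.sqrt (1 - 2 * S₀ ^ 2 * b * t) := by
  intro t ht ht1
  have key : ∀ ε : ℝ, 0 < ε → 2 * (S₀+ε) ^ 2 * (b+ε) * t < 1 →
      S t ≤ (S₀+ε) / Real.sqrt (1 - 2 * (S₀+ε) ^ 2 * (b+ε) * t) :=
    fun ε hε h => aux1 b S₀ T hb hS₀ hT S hScont hSnn hSint (S₀+ε) (b+ε)
      (lt_add_of_pos_right _ hε) (lt_add_of_pos_right _ hε) t ht h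
  have hden : (0:ℝ) < 1 - 2 * S₀ ^ 2 * b * t := by linarith
  have hctA : ContinuousAt (fun ε : ℝ => 2 * (S₀+ε) ^ 2 * (b+ε) * t) 0 := by fun_prop
  have hct : ContinuousAt (fun ε : ℝ => (S₀+ε) / Real.sqrt (1 - 2 * (S₀+ε) ^ 2 * (b+ε) * t)) 0 := by
    apply ContinuousAt.div (by fun_prop) (by fun_prop)
    simp only [add_zero]
    exact ne_of_gt (Real.sqrt_pos.2 hden)
  have htend : Tendsto (fun ε : ℝ => (S₀+ε) / Real.sqrt (1 - 2 * (S₀+ε) ^ 2 * (b+ε) * t))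
      (𝓝[>] 0) (𝓝 (S₀ / Real.sqrt (1 - 2 * S₀ ^ 2 * b * t))) := by
    have h2 : Tendsto (fun ε : ℝ => (S₀+ε) / Real.sqrt (1 - 2 * (S₀+ε) ^ 2 * (b+ε) * t))
        (𝓝[>] 0) (𝓝 ((S₀+0) / Real.sqrt (1 - 2 * (S₀+0) ^ 2 * (b+0) * t))) :=
      hct.tendsto.mono_left nhdsWithin_le_nhds
    simpa using h2
  have hopen : ∀ᶠ ε : ℝ in 𝓝 0, 2 * (S₀+ε) ^ 2 * (b+ε) * t < 1 := by
    have h := hctA.tendsto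
    simp only [add_zero] at h
    exact h.eventually_lt_const ht1
  have hev : ∀ᶠ ε : ℝ in 𝓝[>] 0,
      S t ≤ (S₀+ε) / Real.sqrt (1 - 2 * (S₀+ε) ^ 2 * (b+ε) * t) := by
    filter_upwards [hopen.filter_mono nhdsWithin_le_nhds, self_mem_nhdsWithin] with ε h1 h2
    exact key ε h2 h1
  exact ge_of_tendsto htend hev
end

section
/- For each ρ, L > 0 let c_{ρ,L} : ℤ³ → ℂ with Σ_{n∈ℤ³} |c_{ρ,L}(n)|² = 1, and let α : ℤ³ → ℂ with Σ_{n∈ℤ³} |α(n)|² = 1 be such that lim_{ρ→∞} limsup_{L→∞} Σ_{n∈ℤ³} |c_{ρ,L}(n) − α(n)|² = 0. For each ρ, L > 0 let w_{ρ,L} : ℤ³ → [0,∞) with 0 < Σ_{n∈ℤ³} w_{ρ,L}(n) < ∞, and assume lim_{ρ→∞} liminf_{L→∞} [ Σ_{n∈ℤ³} |c_{ρ,L}(n)|²·w_{ρ,L}(n) / Σ_{m∈ℤ³} w_{ρ,L}(m) ] = 1. Then there exists exactly one k₀ ∈ ℤ³ with α(k₀) ≠ 0, and for this k₀ one has |α(k₀)|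 = 1 (equivalently, α = e^{iθ}·δ_{k₀} for some θ ∈ [0,2π)). -/
open scoped BigOperators
open Filter

noncomputable section

/-- if normalized coefficients `c_{ρ,L}` converge in the iterated
limit (in `ℓ²`) to a normalized `α`, and the occupation weights `w_{ρ,L}` satisfy
`lim_{ρ→∞} liminf_{L→∞} (Σ_n |c_{ρ,L}(n)|²·w_{ρ,L}(n)) / (Σ_m w_{ρ,L}(m)) = 1`,
then `α` is supported on exactly one mode `k₀`, where it has modulus `1`
(i.e. `α = e^{iθ}·δ_{k₀}` for some phase `θ`). -/
theorem stmt16 (c : ℝ → ℝ → (Fin 3 → ℤ) → ℂ)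
    (hc : ∀ ρ L : ℝ, 0 < ρ → 0 < L →
      (Summable fun n => ‖c ρ L n‖ ^ 2) ∧
      ∑' n, ‖c ρ L n‖ ^ 2 = 1)
    (α : (Fin 3 → ℤ) → ℂ)
    (hα : (Summable fun n => ‖α n‖ ^ 2) ∧
      ∑' n, ‖α n‖ ^ 2 = 1)
    (hconv : Tendsto (fun ρ : ℝ =>
        limsup (fun L : ℝ => ∑' n, ‖c ρ L n - α n‖ ^ 2) atTop)
      atTop (nhds 0))
    (w : ℝ → ℝ → (Fin 3 → ℤ) → ℝ)
    (hw : ∀ ρ L : ℝ, 0 < ρ → 0 < L →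
      (∀ n, 0 ≤ w ρ L n) ∧ Summable (w ρ L) ∧ 0 < ∑' n, w ρ L n)
    (hconc : Tendsto (fun ρ : ℝ =>
        liminf (fun L : ℝ =>
          (∑' n, ‖c ρ L n‖ ^ 2 * w ρ L n) / ∑' m, w ρ L m) atTop)
      atTop (nhds 1)) :
    (∃! k₀ : Fin 3 → ℤ, α k₀ ≠ 0) ∧
    ∀ k₀ : Fin 3 → ℤ, α k₀ ≠ 0 → ‖α k₀‖ = 1 := by
  set A : (Fin 3 → ℤ) → ℝ := fun n => ‖α n‖ with hA
  have hAnn : ∀ n, 0 ≤ A n := fun n => norm_nonneg _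
  have hA2le1 : ∀ n, A n ^ 2 ≤ 1 := by
    intro n
    have := hα.1.le_tsum n (fun j _ => sq_nonneg _)
    rwa [hα.2] at this
  have hAle1 : ∀ n, A n ≤ 1 := by
    intro n; nlinarith [hAnn n, hA2le1 n]
  have bdd : BddAbove (Set.range A) := ⟨1, by rintro _ ⟨n, rfl⟩; exact hAle1 n⟩
  set M : ℝ := ⨆ n, A n with hM
  have hM1 : M ≤ 1 := ciSup_le hAle1
  have hMn : ∀ n, A n ≤ M := fun n => le_ciSup bdd n
  have hM0 : 0 ≤ M := le_trans (hAnn 0) (hMn 0)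
  -- summability of the difference
  have hsumD : ∀ ρ L : ℝ, 0 < ρ → 0 < L →
      Summable (fun n => ‖c ρ L n - α n‖ ^ 2) := by
    intro ρ L hρ hL
    refine Summable.of_nonneg_of_le (fun n => sq_nonneg _)
      (fun n => ?_) (((hc ρ L hρ hL).1.add hα.1).mul_left 2)
    have h1 : ‖c ρ L n - α n‖ ≤ ‖c ρ L n‖ + A n := by
      simpa [hA] using norm_sub_le (c ρ L n) (α n)
    have h2 : 0 ≤ ‖c ρ L n - α n‖ := norm_nonneg _
    have h3 := pow_le_pow_left₀ h2 h1 2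
    nlinarith [sq_nonneg (‖c ρ L n‖ - A n)]
  -- bound on the difference sum
  have hDle4 : ∀ ρ L : ℝ, 0 < ρ → 0 < L →
      (∑' n, ‖c ρ L n - α n‖ ^ 2) ≤ 4 := by
    intro ρ L hρ hL
    have hle : ∀ n, ‖c ρ L n - α n‖ ^ 2
        ≤ 2 * (‖c ρ L n‖ ^ 2 + A n ^ 2) := by
      intro n
      have h1 : ‖c ρ L n - α n‖ ≤ ‖c ρ L n‖ + A n := by
        simpa [hA] using norm_sub_le (c ρ L n) (α n)
      have h3 := pow_le_pow_left₀ (norm_nonneg (c ρ L n - α n)) h1 2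
      nlinarith [sq_nonneg (‖c ρ L n‖ - A n)]
    calc (∑' n, ‖c ρ L n - α n‖ ^ 2)
        ≤ ∑' n, 2 * (‖c ρ L n‖ ^ 2 + A n ^ 2) :=
          Summable.tsum_le_tsum hle (hsumD ρ L hρ hL) (((hc ρ L hρ hL).1.add hα.1).mul_left 2)
      _ = 2 * ((∑' n, ‖c ρ L n‖ ^ 2) + ∑' n, A n ^ 2) := by
          rw [tsum_mul_left, Summable.tsum_add (hc ρ L hρ hL).1 hα.1]
      _ = 4 := by rw [(hc ρ L hρ hL).2, hα.2]; norm_num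
  -- key pointwise inequality
  have hkey : ∀ ρ L : ℝ, 0 < ρ → 0 < L →
      (∑' n, ‖c ρ L n‖ ^ 2 * w ρ L n) / (∑' m, w ρ L m)
        ≤ (M + Real.sqrt (∑' n, ‖c ρ L n - α n‖ ^ 2)) ^ 2 := by
    intro ρ L hρ hL
    obtain ⟨hwn, hws, hwp⟩ := hw ρ L hρ hL
    set D := ∑' n, ‖c ρ L n - α n‖ ^ 2 with hD
    have hD0 : 0 ≤ D := tsum_nonneg fun n => sq_nonneg _
    set K := M + Real.sqrt D with hK
    have hK0 : 0 ≤ K := add_nonneg hM0 (Real.sqrt_nonneg _)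
    have hcb : ∀ n, ‖c ρ L n‖ ≤ K := by
      intro n
      have h1 : ‖c ρ L n‖ ≤ A n + ‖c ρ L n - α n‖ := by
        have := norm_sub_le (c ρ L n - α n) (-α n)
        simpa [hA, sub_neg_eq_add, sub_add_cancel] using
          (by simpa using norm_add_le (c ρ L n - α n) (α n) :
            ‖c ρ L n‖ ≤ ‖c ρ L n - α n‖ + A n).trans_eq
          (add_comm _ _)
      have h2 : ‖c ρ L n - α n‖ ≤ Real.sqrt D := by
        have hle : ‖c ρ L n - α n‖ ^ 2 ≤ D :=
          (hsumD ρ L hρ hL).le_tsum n (fun j _ => sq_nonneg _)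
        calc ‖c ρ L n - α n‖
            = Real.sqrt (‖c ρ L n - α n‖ ^ 2) := by
              rw [Real.sqrt_sq (norm_nonneg _)]
          _ ≤ Real.sqrt D := Real.sqrt_le_sqrt hle
      calc ‖c ρ L n‖ ≤ A n + ‖c ρ L n - α n‖ := h1
        _ ≤ M + Real.sqrt D := add_le_add (hMn n) h2
    have hcb2 : ∀ n, ‖c ρ L n‖ ^ 2 * w ρ L n ≤ K ^ 2 * w ρ L n := by
      intro n
      have : ‖c ρ L n‖ ^ 2 ≤ K ^ 2 := by
        nlinarith [norm_nonneg (c ρ L n), hcb n]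
      exact mul_le_mul_of_nonneg_right this (hwn n)
    have hsumcw : Summable (fun n => ‖c ρ L n‖ ^ 2 * w ρ L n) := by
      refine Summable.of_nonneg_of_le
        (fun n => mul_nonneg (sq_nonneg _) (hwn n)) (fun n => ?_) ((hws.mul_left (K ^ 2)))
      exact hcb2 n
    have hsum_le : (∑' n, ‖c ρ L n‖ ^ 2 * w ρ L n) ≤ K ^ 2 * ∑' m, w ρ L m := by
      calc (∑' n, ‖c ρ L n‖ ^ 2 * w ρ L n)
          ≤ ∑' n, K ^ 2 * w ρ L n := Summable.tsum_le_tsum hcb2 hsumcw (hws.mul_left _)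
        _ = K ^ 2 * ∑' m, w ρ L m := tsum_mul_left
    rw [div_le_iff₀ hwp]
    exact hsum_le
  -- 1 ≤ M
  have hMge : 1 ≤ M := by
    by_contra hlt
    push_neg at hlt
    set ε : ℝ := ((1 - M) / 2) ^ 2 with hε
    have hεpos : 0 < ε := pow_pos (by linarith) 2
    have hsq : Real.sqrt ε = (1 - M) / 2 := Real.sqrt_sq (by linarith)
    have hlt1 : (M + Real.sqrt ε) ^ 2 < 1 := by
      rw [hsq]; nlinarith
    -- eventually in ρ: limsup < ε, liminf > (M+√ε)^2, ρ > 0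
    have h1 : ∀ᶠ ρ in atTop,
        limsup (fun L : ℝ => ∑' n, ‖c ρ L n - α n‖ ^ 2) atTop < ε :=
      hconv.eventually (Filter.Tendsto.eventually_lt_const (by simpa using hεpos) tendsto_id)
    have h2 : ∀ᶠ ρ in atTop, (M + Real.sqrt ε) ^ 2 <
        liminf (fun L : ℝ =>
          (∑' n, ‖c ρ L n‖ ^ 2 * w ρ L n) / ∑' m, w ρ L m) atTop :=
      hconc.eventually (Filter.Tendsto.eventually_const_lt hlt1 tendsto_id)
    have h3 : ∀ᶠ ρ : ℝ in atTop, 0 < ρ := eventually_gt_atTop 0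
    obtain ⟨ρ, hg, hf, hρ⟩ := (h1.and (h2.and h3)).exists
    -- bounded hypotheses
    have hbdd : IsBoundedUnder (· ≤ ·) atTop
        (fun L : ℝ => ∑' n, ‖c ρ L n - α n‖ ^ 2) := by
      refine isBoundedUnder_of_eventually_le (a := 4) ?_
      filter_upwards [eventually_gt_atTop (0 : ℝ)] with L hL
      exact hDle4 ρ L hρ hL
    have hev : ∀ᶠ L : ℝ in atTop,
        (∑' n, ‖c ρ L n - α n‖ ^ 2) < ε :=
      eventually_lt_of_limsup_lt hg hbdd
    have hratio_le : ∀ᶠ L : ℝ in atTop,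
        (∑' n, ‖c ρ L n‖ ^ 2 * w ρ L n) / (∑' m, w ρ L m)
          ≤ (M + Real.sqrt ε) ^ 2 := by
      filter_upwards [hev, eventually_gt_atTop (0 : ℝ)] with L hDε hL
      refine (hkey ρ L hρ hL).trans ?_
      have hs : Real.sqrt (∑' n, ‖c ρ L n - α n‖ ^ 2) ≤ Real.sqrt ε :=
        Real.sqrt_le_sqrt hDε.le
      have h0 : 0 ≤ M + Real.sqrt (∑' n, ‖c ρ L n - α n‖ ^ 2) :=
        add_nonneg hM0 (Real.sqrt_nonneg _)
      nlinarith [Real.sqrt_nonneg (∑' n, ‖c ρ L n - α n‖ ^ 2)]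
    have hbdd2 : IsBoundedUnder (· ≥ ·) atTop (fun L : ℝ =>
        (∑' n, ‖c ρ L n‖ ^ 2 * w ρ L n) / ∑' m, w ρ L m) := by
      refine isBoundedUnder_of_eventually_ge (a := 0) ?_
      filter_upwards [eventually_gt_atTop (0 : ℝ)] with L hL
      obtain ⟨hwn, hws, hwp⟩ := hw ρ L hρ hL
      exact div_nonneg (tsum_nonneg fun n => mul_nonneg (sq_nonneg _) (hwn n)) hwp.le
    have := liminf_le_of_frequently_le hratio_le.frequently hbdd2
    exact absurd hf (not_lt.mpr this)
  have hMeq : M = 1 := le_antisymm hM1 hMge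
  -- attainment: ∃ k₀, A k₀ = 1
  have hwit : ∀ ε : ℝ, 0 < ε → ∃ n, 1 - ε < A n := by
    intro ε hε
    have : (1 : ℝ) - ε < M := by rw [hMeq]; linarith
    obtain ⟨n, hn⟩ := exists_lt_of_lt_ciSup this
    exact ⟨n, hn⟩
  obtain ⟨n₁, hn₁⟩ := hwit (1/4) (by norm_num)
  have hk₀ : A n₁ = 1 := by
    by_contra hne
    have hlt : A n₁ < 1 := lt_of_le_of_ne (hAle1 n₁) hne
    set t : ℝ := max (A n₁) (3/4) with ht
    have htlt : t < 1 := max_lt hlt (by norm_num)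
    obtain ⟨n₂, hn₂⟩ := hwit (1 - t) (by linarith)
    have hn₂t : t < A n₂ := by linarith
    have hne' : n₂ ≠ n₁ := by
      intro h; rw [h] at hn₂t
      exact absurd (le_max_left (A n₁) (3/4)) (not_le.mpr hn₂t)
    have hsum2 : A n₁ ^ 2 + A n₂ ^ 2 ≤ 1 := by
      have := Summable.sum_le_tsum ({n₁, n₂} : Finset _) (fun i _ => sq_nonneg (A i)) hα.1
      rw [hα.2] at this
      rwa [Finset.sum_pair (Ne.symm hne')] at this
    have h34 : (3:ℝ)/4 ≤ t := le_max_right _ _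
    nlinarith [hAnn n₁, hAnn n₂]
  have hzero : ∀ n, n ≠ n₁ → α n = 0 := by
    intro n hn
    have hsum2 : A n₁ ^ 2 + A n ^ 2 ≤ 1 := by
      have := Summable.sum_le_tsum ({n₁, n} : Finset _) (fun i _ => sq_nonneg (A i)) hα.1
      rw [hα.2] at this
      rwa [Finset.sum_pair (Ne.symm hn)] at this
    have : A n = 0 := by nlinarith [hAnn n, sq_nonneg (A n)]
    exact norm_eq_zero.mp this
  have hn₁ne : α n₁ ≠ 0 := by
    intro h
    rw [show A n₁ = ‖α n₁‖ from rfl, h] at hk₀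
    simp at hk₀
  refine ⟨⟨n₁, hn₁ne, fun y hy => ?_⟩, fun k hk => ?_⟩
  · by_contra h; exact hy (hzero y h)
  · have : k = n₁ := by by_contra h; exact hk (hzero k h)
    rw [this]; exact hk₀

end
end

section
/- Let C > 0, δ₁ > 0 and let V : ℝ³ → ℝ be continuous with 0 ≤ V(y) ≤ C·(1+|y|)^{−(3+δ₁)} for all y ∈ ℝ³. Then there exists K > 0, depending only on C and δ₁, such that for every L ≥ 1 and every x ∈ ℝ³ with max(|x₁|,|x₂|,|x₃|) ≤ L/2, the series Σ_{n∈ℤ³} V(x + nL) converges and Σ_{n∈ℤ³} V(x + nL) ≤ sup_{y∈ℝ³} V(y) + K·L^{−(3+δ₁)}. -/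
open scoped BigOperators

noncomputable section

/-- Euclidean norm on `ℝ³`. -/
def rnorm (p : Fin 3 → ℝ) : ℝ := Real.sqrt (∑ i, (p i) ^ 2)

lemma abs_le_rnorm (p : Fin 3 → ℝ) (i : Fin 3) : |p i| ≤ rnorm p := by
  rw [← Real.sqrt_sq_eq_abs, rnorm]
  exact Real.sqrt_le_sqrt (Finset.single_le_sum (f := fun j => (p j) ^ 2)
    (fun j _ => sq_nonneg _) (Finset.mem_univ i))

lemma rnorm_nonneg (p : Fin 3 → ℝ) : 0 ≤ rnorm p := Real.sqrt_nonneg _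

/-- One-dimensional summable majorant. -/
lemma summable_g {p : ℝ} (hp : 1 < p) :
    Summable fun m : ℤ => (1 + |(m : ℝ)|) ^ (-p) := by
  refine Summable.of_norm_bounded_eventually (g := fun m : ℤ => |(m : ℝ)| ^ (-p))
    (Real.summable_abs_int_rpow hp) ?_
  rw [Filter.eventually_cofinite]
  refine Set.Finite.subset (Set.finite_singleton (0 : ℤ)) ?_
  intro m hm
  simp only [Set.mem_setOf_eq] at hm
  by_contra h0
  apply hm
  have hm1 : (1 : ℝ) ≤ |(m : ℝ)| := by
    rw [← Int.cast_abs, ← Int.cast_one, Int.cast_le]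
    exact Int.one_le_abs h0
  have : (1 + |(m : ℝ)|) ^ (-p) ≤ |(m : ℝ)| ^ (-p) :=
    Real.rpow_le_rpow_of_nonpos (by linarith) (by linarith) (by linarith)
  calc ‖(1 + |(m : ℝ)|) ^ (-p)‖ = (1 + |(m : ℝ)|) ^ (-p) := by
        rw [Real.norm_of_nonneg (Real.rpow_nonneg (by positivity) _)]
    _ ≤ |(m : ℝ)| ^ (-p) := this

/-- Equivalence between `ℤ × ℤ × ℤ` and `Fin 3 → ℤ`. -/
def e3 : (ℤ × ℤ × ℤ) ≃ (Fin 3 → ℤ) where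
  toFun q := ![q.1, q.2.1, q.2.2]
  invFun n := (n 0, n 1, n 2)
  left_inv q := by simp
  right_inv n := by
    funext i
    fin_cases i <;> simp

lemma summable_F {p : ℝ} (hp : 1 < p) :
    Summable fun n : Fin 3 → ℤ => ∏ i, (1 + |((n i : ℝ))|) ^ (-p) := by
  rw [← e3.summable_iff]
  have hg := summable_g hp
  have hgn : (0 : ℤ → ℝ) ≤ fun m : ℤ => (1 + |(m : ℝ)|) ^ (-p) :=
    fun m => Real.rpow_nonneg (by positivity) _
  have h2 : Summable fun q : ℤ × ℤ => ((1 + |(q.1 : ℝ)|) ^ (-p)) * ((1 + |(q.2 : ℝ)|) ^ (-p)) :=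
    hg.mul_of_nonneg hg hgn hgn
  have h3 := hg.mul_of_nonneg h2 hgn (fun q => mul_nonneg (hgn _) (hgn _))
  refine h3.congr fun q => ?_
  simp only [Function.comp_apply, e3, Equiv.coe_fn_mk, Fin.prod_univ_three]
  simp [mul_assoc]

/-- uniform bound on the periodization. For `V` continuous with
`0 ≤ V(y) ≤ C(1+|y|)^{−(3+δ₁)}`, there is a constant `K > 0` depending only on
`C` and `δ₁` such that for every `L ≥ 1` and every `x` with `max_i |x_i| ≤ L/2`,
the series `Σ_{n∈ℤ³} V(x+nL)` converges and is at most
`sup_y V(y) + K·L^{−(3+δ₁)}`. -/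
theorem stmt17 (C δ₁ : ℝ) (hC : 0 < C) (hδ : 0 < δ₁) :
    ∃ K : ℝ, 0 < K ∧
      ∀ V : (Fin 3 → ℝ) → ℝ, Continuous V →
        (∀ y, 0 ≤ V y ∧ V y ≤ C * (1 + rnorm y) ^ (-(3 + δ₁))) →
        ∀ L : ℝ, 1 ≤ L → ∀ x : Fin 3 → ℝ, (∀ i, |x i| ≤ L / 2) →
          (Summable fun n : Fin 3 → ℤ => V (x + fun i => (n i : ℝ) * L)) ∧
          ∑' n : Fin 3 → ℤ, V (x + fun i => (n i : ℝ) * L)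
            ≤ (⨆ y, V y) + K * L ^ (-(3 + δ₁)) := by
  set s : ℝ := 3 + δ₁ with hs
  set p : ℝ := s / 3 with hp
  have hp1 : 1 < p := by rw [hp, hs]; nlinarith
  have hp0 : 0 ≤ p := by linarith
  have hs0 : 0 < s := by rw [hs]; linarith
  set F : (Fin 3 → ℤ) → ℝ := fun n => ∏ i, (1 + |((n i : ℝ))|) ^ (-p) with hF
  have hFsum : Summable F := summable_F hp1
  have hFnn : ∀ n, 0 ≤ F n := fun n =>
    Finset.prod_nonneg fun i _ => Real.rpow_nonneg (by positivity) _
  set A : ℝ := C * 4 ^ s with hA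
  have hA0 : 0 < A := by
    apply mul_pos hC
    exact Real.rpow_pos_of_pos (by norm_num) _
  have htF0 : 0 ≤ ∑' n, F n := tsum_nonneg hFnn
  refine ⟨A * (∑' n, F n) + 1, by positivity, ?_⟩
  intro V _hV hVb L hL x hx
  have hL0 : 0 < L := lt_of_lt_of_le one_pos hL
  have hLs : 0 < L ^ (-s) := Real.rpow_pos_of_pos hL0 _
  set W : (Fin 3 → ℤ) → ℝ := fun n => V (x + fun i => (n i : ℝ) * L) with hW
  have hW0 : ∀ n, 0 ≤ W n := fun n => (hVb _).1
  -- V is bounded above by C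
  have hVC : ∀ y, V y ≤ C := by
    intro y
    refine (hVb y).2.trans ?_
    calc C * (1 + rnorm y) ^ (-s) ≤ C * 1 := by
          apply mul_le_mul_of_nonneg_left _ hC.le
          apply Real.rpow_le_one_of_one_le_of_nonpos
          · linarith [rnorm_nonneg y]
          · linarith
      _ = C := mul_one C
  have hbdd : BddAbove (Set.range V) := ⟨C, by rintro _ ⟨y, rfl⟩; exact hVC y⟩
  -- key bound for n ≠ 0
  have key : ∀ n : Fin 3 → ℤ, n ≠ 0 → W n ≤ A * L ^ (-s) * F n := by
    intro n hn
    set y : Fin 3 → ℝ := x + fun i => (n i : ℝ) * L with hy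
    set R : ℝ := rnorm y with hR
    have hR0 : 0 ≤ R := rnorm_nonneg y
    obtain ⟨j, hj⟩ : ∃ j, n j ≠ 0 := by
      by_contra h
      push_neg at h
      exact hn (funext h)
    have hj1 : (1 : ℝ) ≤ |(n j : ℝ)| := by
      rw [← Int.cast_abs, ← Int.cast_one, Int.cast_le]
      exact Int.one_le_abs hj
    have hyj : L / 2 ≤ |y j| := by
      have : |y j| = |(n j : ℝ) * L + x j| := by rw [hy]; simp [Pi.add_apply]; ring_nf
      rw [this]
      have h1 : |(n j : ℝ) * L| - |x j| ≤ |(n j : ℝ) * L + x j| := by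
        have := abs_add_le ((n j : ℝ) * L + x j) (-(x j))
        simp at this
        calc |(n j : ℝ) * L| - |x j| ≤ |(n j : ℝ) * L + x j| + |x j| - |x j| := by
              have h2 : |(n j : ℝ) * L| ≤ |(n j : ℝ) * L + x j| + |x j| := by
                calc |(n j : ℝ) * L| = |((n j : ℝ) * L + x j) + (-(x j))| := by ring_nf
                  _ ≤ |(n j : ℝ) * L + x j| + |(-(x j))| := abs_add_le _ _
                  _ = |(n j : ℝ) * L + x j| + |x j| := by rw [abs_neg]
              linarith
          _ = |(n j : ℝ) * L + x j| := by ring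
      have h3 : L ≤ |(n j : ℝ) * L| := by
        rw [abs_mul, abs_of_pos hL0]
        nlinarith
      have := hx j
      linarith
    -- Claim A: ∀ i, L/4 * (1 + |n i|) ≤ 1 + R
    have claimA : ∀ i, L / 4 * (1 + |(n i : ℝ)|) ≤ 1 + R := by
      intro i
      by_cases hni : n i = 0
      · rw [hni]
        simp only [Int.cast_zero, abs_zero, add_zero, mul_one]
        have : |y j| ≤ R := abs_le_rnorm y j
        linarith
      · have hi1 : (1 : ℝ) ≤ |(n i : ℝ)| := by
          rw [← Int.cast_abs, ← Int.cast_one, Int.cast_le]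
          exact Int.one_le_abs hni
        have hyi : L / 4 * (1 + |(n i : ℝ)|) ≤ |y i| := by
          have h1 : |(n i : ℝ) * L| - |x i| ≤ |y i| := by
            have h2 : |(n i : ℝ) * L| ≤ |y i| + |x i| := by
              calc |(n i : ℝ) * L| = |(x i + (n i : ℝ) * L) + (-(x i))| := by ring_nf
                _ ≤ |x i + (n i : ℝ) * L| + |(-(x i))| := abs_add_le _ _
                _ = |y i| + |x i| := by rw [abs_neg, hy]; simp [Pi.add_apply]
            linarith
          have h3 : |(n i : ℝ) * L| = |(n i : ℝ)| * L := by rw [abs_mul, abs_of_pos hL0]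
          have := hx i
          nlinarith
        have : |y i| ≤ R := abs_le_rnorm y i
        linarith
    -- Claim B
    have hL4 : 0 < L / 4 := by linarith
    have claimB : (L / 4) ^ s * ∏ i, (1 + |(n i : ℝ)|) ^ p ≤ (1 + R) ^ s := by
      have step : ∀ i ∈ Finset.univ, (L / 4 * (1 + |(n i : ℝ)|)) ^ p ≤ ((1 + R) ^ p) := by
        intro i _
        exact Real.rpow_le_rpow (by positivity) (claimA i) hp0
      have h1 : ∏ i : Fin 3, (L / 4 * (1 + |(n i : ℝ)|)) ^ p ≤ ∏ _i : Fin 3, (1 + R) ^ p :=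
        Finset.prod_le_prod (fun i _ => by positivity) step
      have h2 : ∏ _i : Fin 3, (1 + R) ^ p = (1 + R) ^ s := by
        rw [Finset.prod_const, Finset.card_univ, Fintype.card_fin,
          ← Real.rpow_natCast ((1 + R) ^ p) 3, ← Real.rpow_mul (by positivity)]
        congr 1
        rw [hp]; push_cast; field_simp
      have h3 : ∏ i : Fin 3, (L / 4 * (1 + |(n i : ℝ)|)) ^ p
          = (L / 4) ^ s * ∏ i, (1 + |(n i : ℝ)|) ^ p := by
        rw [Finset.prod_congr rfl (fun i _ => Real.mul_rpow hL4.le (by positivity)),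
          Finset.prod_mul_distrib, Finset.prod_const, Finset.card_univ, Fintype.card_fin,
          ← Real.rpow_natCast ((L / 4) ^ p) 3, ← Real.rpow_mul hL4.le]
        congr 2
        rw [hp]; push_cast; field_simp
      rw [← h3, ← h2]; exact h1
    -- conclude
    have hB0 : 0 < (L / 4) ^ s * ∏ i, (1 + |(n i : ℝ)|) ^ p := by
      apply mul_pos (Real.rpow_pos_of_pos hL4 _)
      exact Finset.prod_pos fun i _ => Real.rpow_pos_of_pos (by positivity) _
    have hinv : (1 + R) ^ (-s) ≤ ((L / 4) ^ s * ∏ i, (1 + |(n i : ℝ)|) ^ p)⁻¹ := by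
      rw [Real.rpow_neg (by positivity), inv_le_inv₀ (Real.rpow_pos_of_pos (by positivity) _) hB0]
      exact claimB
    have hrw : ((L / 4) ^ s * ∏ i, (1 + |(n i : ℝ)|) ^ p)⁻¹ = 4 ^ s * L ^ (-s) * F n := by
      rw [mul_inv, ← Finset.prod_inv_distrib]
      have h4 : ((L / 4 : ℝ) ^ s)⁻¹ = 4 ^ s * L ^ (-s) := by
        rw [Real.div_rpow hL0.le (by norm_num), Real.rpow_neg hL0.le]
        field_simp
      have h5 : ∀ i : Fin 3, ((1 + |(n i : ℝ)|) ^ p)⁻¹ = (1 + |(n i : ℝ)|) ^ (-p) := by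
        intro i; rw [← Real.rpow_neg (by positivity)]
      rw [h4, Finset.prod_congr rfl (fun i _ => h5 i), hF]
    calc W n ≤ C * (1 + R) ^ (-s) := (hVb y).2
      _ ≤ C * (4 ^ s * L ^ (-s) * F n) := by
          apply mul_le_mul_of_nonneg_left _ hC.le
          rw [← hrw]; exact hinv
      _ = A * L ^ (-s) * F n := by rw [hA]; ring
  -- majorant
  set G : (Fin 3 → ℤ) → ℝ := fun n => (if n = 0 then V x else 0) + A * L ^ (-s) * F n with hG
  have hWG : ∀ n, W n ≤ G n := by
    intro n
    by_cases hn : n = 0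
    · subst hn
      have hx0 : (x + fun i => (((0 : Fin 3 → ℤ) i : ℝ)) * L) = x := by
        funext i; simp
      have hW00 : W 0 = V x := by
        show V (x + fun i => (((0 : Fin 3 → ℤ) i : ℝ)) * L) = V x
        rw [hx0]
      have hG0 : G 0 = V x + A * L ^ (-s) * F 0 := by
        show (if (0 : Fin 3 → ℤ) = 0 then V x else 0) + A * L ^ (-s) * F 0 = _
        rw [if_pos rfl]
      rw [hG0, hW00]
      have : 0 ≤ A * L ^ (-s) * F 0 := by positivity
      linarith
    · have hGn : G n = A * L ^ (-s) * F n := by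
        show (if n = 0 then V x else 0) + A * L ^ (-s) * F n = _
        rw [if_neg hn, zero_add]
      rw [hGn]
      exact key n hn
  have hGsum : Summable G := by
    apply Summable.add
    · exact (hasSum_ite_eq (0 : Fin 3 → ℤ) (V x)).summable
    · exact (hFsum.mul_left _)
  have hWsum : Summable W := Summable.of_nonneg_of_le hW0 hWG hGsum
  refine ⟨hWsum, ?_⟩
  have htG : ∑' n, G n = V x + A * L ^ (-s) * ∑' n, F n := by
    rw [hG, Summable.tsum_add ((hasSum_ite_eq (0 : Fin 3 → ℤ) (V x)).summable) (hFsum.mul_left _),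
      (hasSum_ite_eq (0 : Fin 3 → ℤ) (V x)).tsum_eq, tsum_mul_left]
  have h1 : ∑' n, W n ≤ ∑' n, G n := Summable.tsum_le_tsum hWG hWsum hGsum
  have h2 : V x ≤ ⨆ y, V y := le_ciSup hbdd x
  have h3 : A * L ^ (-s) * ∑' n, F n ≤ (A * (∑' n, F n) + 1) * L ^ (-s) := by
    nlinarith
  calc ∑' n, W n ≤ V x + A * L ^ (-s) * ∑' n, F n := by rw [← htG]; exact h1
    _ ≤ (⨆ y, V y) + (A * (∑' n, F n) + 1) * L ^ (-s) := by linarith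
end
end
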